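/- arXiv:1512.08344 — 4 statements merged into one kernel-verified Lean document; each statement's English description precedes it below -/
import Mathlib

section
/- If G is a connected graph that contains a cut-vertex, then λ(G) ≤ (1/2)·Δ(G), where Δ(G) is the maximum degree of G. -/
open SimpleGraph

section Defs

variable {V : Type*}

/-- The set of edges of `G` with one endpoint in `X` and the other outside `X`. -/
def edgeBoundary (G : SimpleGraph V) (X : Set V) : Set (Sym2 V) :=
  {e | e ∈ G.edgeSet ∧ ∃ u ∈ X, ∃ v ∈ Xᶜ, e = s(u, v)}

/-- The edge-connectivity `λ(G)`: the minimum number of edges whose removal disconnects `G`. -/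
noncomputable def edgeConn (G : SimpleGraph V) : ℕ :=
  sInf {k | ∃ F : Set (Sym2 V), F ⊆ G.edgeSet ∧ F.ncard = k ∧ ¬(G.deleteEdges F).Connected}

/-- `F` is a restricted edge-cut of `G`: removing `F` disconnects `G` and leaves no
isolated vertices. -/
def IsRestrictedEdgeCut (G : SimpleGraph V) (F : Set (Sym2 V)) : Prop :=
  F ⊆ G.edgeSet ∧ ¬(G.deleteEdges F).Connected ∧ ∀ v : V, ∃ w : V, (G.deleteEdges F).Adj v w

/-- The restricted edge-connectivity `λ'(G)`. -/
noncomputable def restrictedEdgeConn (G : SimpleGraph V) : ℕ :=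
  sInf {k | ∃ F : Set (Sym2 V), IsRestrictedEdgeCut G F ∧ F.ncard = k}

/-- The vertex-connectivity `κ(G)`: the minimum size of a set of vertices whose removal
leaves a disconnected graph or a graph with at most one vertex. -/
noncomputable def vertexConn (G : SimpleGraph V) : ℕ :=
  sInf {k | ∃ S : Set V, S.ncard = k ∧
    (¬(G.induce (Sᶜ : Set V)).Connected ∨ (Sᶜ : Set V).ncard ≤ 1)}

/-- The minimum edge-degree `ξ(G) = min {d(u) + d(v) - 2 : uv ∈ E(G)}`. -/
noncomputable def minEdgeDegree (G : SimpleGraph V) : ℕ :=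
  sInf {k | ∃ u v : V, G.Adj u v ∧ (G.neighborSet u).ncard + (G.neighborSet v).ncard - 2 = k}

/-- `G` is `λ'`-optimal if `λ'(G) = ξ(G)`. -/
def LambdaPrimeOptimal (G : SimpleGraph V) : Prop :=
  restrictedEdgeConn G = minEdgeDegree G

/-- The replacement product of `G1` and `G2` with respect to an edge-labelling `ℓ`,
where `ℓ x i` is the other endpoint of the edge of `G1` labelled `i` at the vertex `x`.
Vertices `(x, i)` and `(y, j)` are adjacent iff either `x = y` and `i j ∈ E(G2)`, or
`x y ∈ E(G1)` and the edge `x y` is labelled `i` at `x` and `j` at `y`. -/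
def replacementProduct {V1 V2 : Type*} (G1 : SimpleGraph V1) (G2 : SimpleGraph V2)
    (ℓ : V1 → V2 → V1) : SimpleGraph (V1 × V2) where
  Adj p q := (p.1 = q.1 ∧ G2.Adj p.2 q.2) ∨
    (G1.Adj p.1 q.1 ∧ ℓ p.1 p.2 = q.1 ∧ ℓ q.1 q.2 = p.1)
  symm := by
    constructor
    rintro p q (⟨h1, h2⟩ | ⟨h1, h2, h3⟩)
    · exact Or.inl ⟨h1.symm, h2.symm⟩
    · exact Or.inr ⟨h1.symm, h3, h2⟩
  loopless := by
    constructor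
    rintro p (⟨_, h⟩ | ⟨h, _⟩)
    · exact G2.irrefl h
    · exact G1.irrefl h

/-- `ℓ` is a valid edge-labelling of `G1` for the replacement product:
for each vertex `x`, `ℓ x` is injective and `ℓ x i` is always a neighbour of `x`
(hence `ℓ x` enumerates the neighbours of `x` when `G1` is `|V2|`-regular). -/
def IsRPLabelling {V1 V2 : Type*} (G1 : SimpleGraph V1) (ℓ : V1 → V2 → V1) : Prop :=
  (∀ x, Function.Injective (ℓ x)) ∧ ∀ x i, G1.Adj x (ℓ x i)

end Defs

/-! Let `v` be a cut vertex and `C` a component of `G - v`. Every edge of `G` leaving `C`, and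
every edge leaving the union of the other components, ends at `v`. Hence deleting the edges from
`v` into `C`, or those from `v` into the rest of `G - v`, disconnects `G`. These two edge sets
partition the edges at `v`, so one of them has at most `deg v / 2 ≤ Δ(G) / 2` edges. -/

section EdgeConnectivity

variable {V : Type*} (G : SimpleGraph V)

lemma edgeConn_eq_zero_of_subsingleton [Subsingleton V] : edgeConn G = 0 := by
  refine Nat.sInf_eq_zero.2 ?_
  rcases isEmpty_or_nonempty V with hV | hV
  · exact Or.inl ⟨∅, Set.empty_subset _, Set.ncard_empty _,
      fun h => hV.false h.nonempty.some⟩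
  · exact Or.inr (Set.eq_empty_of_forall_notMem fun _ ⟨_, _, _, h⟩ => h .of_subsingleton)

lemma not_connected_deleteEdges_edgeBoundary {X : Set V} {x y : V} (hx : x ∈ X) (hy : y ∉ X) :
    ¬(G.deleteEdges (edgeBoundary G X)).Connected := by
  intro h
  obtain ⟨p⟩ := h.preconnected x y
  obtain ⟨d, -, hd, hd'⟩ := p.exists_boundary_dart X hx hy
  have hadj := d.adj
  rw [deleteEdges_adj] at hadj
  exact hadj.2 ⟨hadj.1, d.fst, hd, d.snd, hd', rfl⟩

lemma edgeConn_le_ncard_edgeBoundary {X : Set V} {x y : V} (hx : x ∈ X) (hy : y ∉ X) :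
    edgeConn G ≤ (edgeBoundary G X).ncard :=
  Nat.sInf_le ⟨_, fun _ he => he.1, rfl, not_connected_deleteEdges_edgeBoundary G hx hy⟩

lemma edgeBoundary_subset_image_neighborSet_inter {v : V} {C : Set V} (hv : v ∉ C)
    (hC : ∀ w ∈ C, ∀ u, G.Adj w u → u ≠ v → u ∈ C) :
    edgeBoundary G C ⊆ (fun u => s(v, u)) '' (G.neighborSet v ∩ C) := by
  rintro e ⟨he, w, hw, u, hu, rfl⟩
  obtain rfl : u = v := by_contra fun h => hu (hC w hw u he h)
  exact ⟨w, ⟨he.symm, hw⟩, Sym2.eq_swap⟩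

lemma edgeConn_le_ncard_neighborSet_inter [Finite V] {v : V} {C : Set V} (hne : C.Nonempty)
    (hv : v ∉ C) (hC : ∀ w ∈ C, ∀ u, G.Adj w u → u ≠ v → u ∈ C) :
    edgeConn G ≤ (G.neighborSet v ∩ C).ncard := by
  obtain ⟨x, hx⟩ := hne
  calc edgeConn G ≤ (edgeBoundary G C).ncard := edgeConn_le_ncard_edgeBoundary G hx hv
    _ ≤ ((fun u => s(v, u)) '' (G.neighborSet v ∩ C)).ncard :=
      Set.ncard_le_ncard (edgeBoundary_subset_image_neighborSet_inter G hv hC)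
    _ ≤ (G.neighborSet v ∩ C).ncard := Set.ncard_image_le

lemma edgeConn_le_ncard_neighborSet_inter_image [Finite V] {v : V}
    {S : Set ({v}ᶜ : Set V)} (hne : S.Nonempty)
    (hS : ∀ x y, (G.induce {v}ᶜ).Adj x y → x ∈ S → y ∈ S) :
    edgeConn G ≤ (G.neighborSet v ∩ Subtype.val '' S).ncard := by
  refine edgeConn_le_ncard_neighborSet_inter G (hne.image _) (fun ⟨x, hx, hxv⟩ => x.2 hxv) ?_
  rintro _ ⟨x, hx, rfl⟩ u hxu huv
  exact ⟨⟨u, huv⟩, hS x ⟨u, huv⟩ hxu hx, rfl⟩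

lemma ncard_neighborSet_inter_image_add_compl [Fintype V] [DecidableRel G.Adj] (v : V)
    (S : Set ({v}ᶜ : Set V)) :
    (G.neighborSet v ∩ Subtype.val '' S).ncard + (G.neighborSet v ∩ Subtype.val '' Sᶜ).ncard =
      G.degree v := by
  have hN : G.neighborSet v ∩ Subtype.val '' Sᶜ = G.neighborSet v \ Subtype.val '' S := by
    rw [Set.image_compl_eq_range_sdiff_image Subtype.val_injective, Subtype.range_coe,
      ← Set.inter_sdiff_assoc,
      Set.inter_eq_left.2 (Set.subset_compl_singleton_iff.2 G.notMem_neighborSet_self)]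
  rw [hN, Set.ncard_inter_add_ncard_sdiff_eq_ncard, ← card_neighborSet_eq_degree,
    Set.ncard_eq_toFinset_card', Set.toFinset_card]

end EdgeConnectivity

theorem edgeConn_le_half_maxDegree_of_cutVertex_general
    {V : Type*} [Fintype V] (G : SimpleGraph V) [DecidableRel G.Adj]
    (hcut : ∃ v : V, ¬(G.induce ({v}ᶜ : Set V)).Connected) :
    2 * edgeConn G ≤ G.maxDegree := by
  obtain ⟨v, hv⟩ := hcut
  rcases isEmpty_or_nonempty ({v}ᶜ : Set V) with hempty | _
  · -- `V = {v}`: the empty graph `G - v` does not count as connected.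
    have hall : ∀ w, w = v := fun w => by_contra fun hw => hempty.false ⟨w, hw⟩
    have : Subsingleton V := ⟨fun x y => (hall x).trans (hall y).symm⟩
    simp [edgeConn_eq_zero_of_subsingleton]
  obtain ⟨a, b, hab⟩ : ∃ a b, ¬(G.induce ({v}ᶜ : Set V)).Reachable a b := by
    by_contra! h
    exact hv ⟨h⟩
  set c := (G.induce ({v}ᶜ : Set V)).connectedComponentMk a
  have h₁ : edgeConn G ≤ (G.neighborSet v ∩ Subtype.val '' c.supp).ncard :=
    edgeConn_le_ncard_neighborSet_inter_image G ⟨a, rfl⟩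
      fun _ _ h hx => (c.mem_supp_congr_adj h).1 hx
  have h₂ : edgeConn G ≤ (G.neighborSet v ∩ Subtype.val '' c.suppᶜ).ncard :=
    edgeConn_le_ncard_neighborSet_inter_image G
      ⟨b, fun hb => hab (ConnectedComponent.exact hb).symm⟩
      fun _ _ h hx hy => hx ((c.mem_supp_congr_adj h).2 hy)
  have hsplit := ncard_neighborSet_inter_image_add_compl G v c.supp
  have hdeg := G.degree_le_maxDegree v
  omega

/-- Lemma 3.3. If a connected graph `G` contains a cut-vertex, then
`λ(G) ≤ Δ(G)/2`, i.e. `2·λ(G) ≤ Δ(G)`. -/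
theorem edgeConn_le_half_maxDegree_of_cutVertex
    {V : Type*} [Fintype V] (G : SimpleGraph V) [DecidableRel G.Adj]
    (hconn : G.Connected)
    (hcut : ∃ v : V, ¬(G.induce ({v}ᶜ : Set V)).Connected) :
    2 * edgeConn G ≤ G.maxDegree :=
  edgeConn_le_half_maxDegree_of_cutVertex_general G hcut
end

section
/- For any n-regular connected graph G, λ(G®K_n) = λ(G), where K_n is the complete graph on n vertices. -/
open SimpleGraph

/-!
Whole clouds turn a cut `∂Y` of `G` into a cut `∂(Y × V(K_n))` of `G ® K_n` of the same size, so
`λ(G ® K_n) ≤ λ(G)`. Conversely, let `Z` be a proper nonempty vertex set of `G ® K_n` and pick a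
proper nonempty `Y ⊆ V(G)` containing every cloud that lies inside `Z` and contained in the set of
clouds that meet `Z`: the full clouds if there are any, otherwise one cloud meeting `Z`. Each edge
`xy` of `G` leaving `Y` is charged injectively to an edge leaving `Z`: to its lift `(x,i)(y,j)` if
that leaves `Z`, and otherwise to an edge inside the cloud of `y` (if both ends lie in `Z`; that
cloud is not full) or inside the cloud of `x` (if neither does; that cloud meets `Z`). As the
clouds are complete, such edges exist, and `λ(G) ≤ |∂Y| ≤ |∂Z|`.
-/

open Set

lemma Sym2.mk_eq_mk_of_notMem_of_mem {α : Type*} {S : Set α} {a b c d : α}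
    (h : s(a, b) = s(c, d)) (hb : b ∉ S) (hc : c ∈ S) : a = c ∧ b = d := by
  rcases Sym2.eq_iff.1 h with h | ⟨rfl, rfl⟩
  · exact h
  · exact absurd hc hb

section EdgeBoundary

variable {W : Type*} {H : SimpleGraph W}

lemma mk_mem_edgeBoundary {Z : Set W} {u v : W} (huv : H.Adj u v) (hZ : u ∈ Z ↔ v ∉ Z) :
    s(u, v) ∈ edgeBoundary H Z := by
  by_cases hu : u ∈ Z
  · exact ⟨huv, u, hu, v, hZ.1 hu, rfl⟩
  · exact ⟨huv, v, not_not.1 (mt hZ.2 hu), u, hu, Sym2.eq_swap⟩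

lemma not_connected_deleteEdges_edgeBoundary_s5 {Z : Set W} {a b : W} (ha : a ∈ Z) (hb : b ∉ Z) :
    ¬(H.deleteEdges (edgeBoundary H Z)).Connected := fun hc => by
  obtain ⟨p⟩ := hc.preconnected a b
  obtain ⟨d, -, hd1, hd2⟩ := p.exists_boundary_dart Z ha hb
  have hd := (deleteEdges_adj).1 d.adj
  exact hd.2 ⟨hd.1, _, hd1, _, hd2, rfl⟩

lemma edgeConn_le_ncard_edgeBoundary_s5 {Z : Set W} {a b : W} (ha : a ∈ Z) (hb : b ∉ Z) :
    edgeConn H ≤ (edgeBoundary H Z).ncard :=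
  Nat.sInf_le ⟨_, fun _ he => he.1, rfl, not_connected_deleteEdges_edgeBoundary_s5 ha hb⟩

lemma exists_edgeBoundary_subset_of_not_connected [Nonempty W] {F : Set (Sym2 W)}
    (hF : ¬(H.deleteEdges F).Connected) :
    ∃ Z : Set W, Z.Nonempty ∧ Zᶜ.Nonempty ∧ edgeBoundary H Z ⊆ F := by
  obtain ⟨a, b, hab⟩ : ∃ a b, ¬(H.deleteEdges F).Reachable a b := by
    by_contra! h
    exact hF ⟨h⟩
  refine ⟨{v | (H.deleteEdges F).Reachable a v}, ⟨a, .rfl⟩, ⟨b, hab⟩, ?_⟩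
  rintro _ ⟨he, u, hu, v, hv, rfl⟩
  by_contra huv
  exact hv (hu.trans ((deleteEdges_adj).2 ⟨he, huv⟩).reachable)

lemma le_edgeConn [Finite W] [Nontrivial W] {k : ℕ}
    (h : ∀ Z : Set W, Z.Nonempty → Zᶜ.Nonempty → k ≤ (edgeBoundary H Z).ncard) :
    k ≤ edgeConn H := by
  obtain ⟨a, b, hab⟩ := exists_pair_ne W
  refine le_csInf ⟨_, _, fun _ he => he.1, rfl,
    not_connected_deleteEdges_edgeBoundary_s5 (mem_singleton a) hab.symm⟩ ?_
  rintro _ ⟨F, -, rfl, hF⟩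
  obtain ⟨Z, hZ, hZc, hZF⟩ := exists_edgeBoundary_subset_of_not_connected hF
  exact (h Z hZ hZc).trans (ncard_le_ncard hZF)

lemma edgeConn_eq_zero_of_subsingleton_s5 [Subsingleton W] : edgeConn H = 0 := by
  refine Nat.sInf_eq_zero.2 ?_
  cases isEmpty_or_nonempty W
  · exact .inl ⟨∅, empty_subset _, ncard_empty _, fun hc => hc.nonempty.elim isEmptyElim⟩
  · refine .inr (eq_empty_of_forall_notMem ?_)
    rintro _ ⟨F, -, -, hF⟩
    exact hF ⟨fun a b => Subsingleton.elim a b ▸ .rfl⟩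

end EdgeBoundary

section ReplacementProduct

variable {V1 V2 : Type*} {G : SimpleGraph V1} {ℓ : V1 → V2 → V1}

lemma IsRPLabelling.exists_label [Finite V1] (hℓ : IsRPLabelling G ℓ) {x y : V1}
    (hx : (G.neighborSet x).ncard = Nat.card V2) (hxy : G.Adj x y) : ∃ i, ℓ x i = y := by
  let g : V2 → G.neighborSet x := fun i => ⟨ℓ x i, hℓ.2 x i⟩
  have hg : g.Bijective := (Nat.bijective_iff_injective_and_card g).2
    ⟨fun i j h => hℓ.1 x (congrArg Subtype.val h), by rw [Nat.card_coe_set_eq, hx]⟩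
  obtain ⟨i, hi⟩ := hg.2 ⟨y, hxy⟩
  exact ⟨i, congrArg Subtype.val hi⟩

lemma replacementProduct_adj_of_ne {G2 : SimpleGraph V2} {x y : V1} {i j : V2}
    (h : (replacementProduct G G2 ℓ).Adj (x, i) (y, j)) (hxy : x ≠ y) :
    G.Adj x y ∧ ℓ x i = y ∧ ℓ y j = x :=
  h.resolve_left fun h' => hxy h'.1

lemma ncard_edgeBoundary_prod_univ_le [Finite V1] [Finite V2] (G2 : SimpleGraph V2)
    (hinj : ∀ x, (ℓ x).Injective) (Y : Set V1) :
    (edgeBoundary (replacementProduct G G2 ℓ) (Y ×ˢ univ)).ncard ≤ (edgeBoundary G Y).ncard := by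
  refine ncard_le_ncard_of_injOn (Sym2.map Prod.fst) ?_ ?_
  · rintro _ ⟨he, ⟨x, i⟩, ⟨hx, -⟩, ⟨y, j⟩, hy, rfl⟩
    replace hy : y ∉ Y := fun h => hy ⟨h, mem_univ _⟩
    exact ⟨(replacementProduct_adj_of_ne he (ne_of_mem_of_not_mem hx hy)).1, x, hx, y, hy, rfl⟩
  · rintro _ ⟨he, ⟨x, i⟩, ⟨hx, -⟩, ⟨y, j⟩, hy, rfl⟩ _ ⟨he', ⟨x', i'⟩, ⟨hx', -⟩, ⟨y', j'⟩, -, rfl⟩ h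
    replace hy : y ∉ Y := fun h => hy ⟨h, mem_univ _⟩
    obtain ⟨rfl, rfl⟩ := Sym2.mk_eq_mk_of_notMem_of_mem h hy hx'
    obtain ⟨-, hi, hj⟩ := replacementProduct_adj_of_ne he (ne_of_mem_of_not_mem hx hy)
    obtain ⟨-, hi', hj'⟩ := replacementProduct_adj_of_ne he' (ne_of_mem_of_not_mem hx hy)
    rw [hinj x (hi.trans hi'.symm), hinj y (hj.trans hj'.symm)]

lemma mk_mem_edgeBoundary_replacementProduct_top {Z : Set (V1 × V2)} {x : V1} {i j : V2}
    (hi : (x, i) ∈ Z) (hj : (x, j) ∉ Z) :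
    s((x, i), (x, j)) ∈ edgeBoundary (replacementProduct G ⊤ ℓ) Z :=
  ⟨Or.inl ⟨rfl, fun h : i = j => hj (h ▸ hi)⟩, _, hi, _, hj, rfl⟩

lemma ncard_edgeBoundary_le_replacementProduct_top [Finite V1] [Finite V2] [Nonempty V2]
    (hℓ : IsRPLabelling G ℓ) (lab : V1 → V1 → V2)
    (hlab : ∀ x y, G.Adj x y → ℓ x (lab x y) = y) {Z : Set (V1 × V2)} {Y : Set V1}
    (hin : ∀ x ∈ Y, ∃ i, (x, i) ∈ Z) (hout : ∀ y ∉ Y, ∃ j, (y, j) ∉ Z) :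
    (edgeBoundary G Y).ncard ≤ (edgeBoundary (replacementProduct G ⊤ ℓ) Z).ncard := by
  classical
  choose! inZ hinZ using hin
  choose! outZ houtZ using hout
  -- `D` indexes the edges of `G` leaving `Y` by the label at their end in `Y`;
  -- `σ p` is the neighbour of `p` in another cloud.
  let D : Set (V1 × V2) := {p | p.1 ∈ Y ∧ ℓ p.1 p.2 ∉ Y}
  let σ : V1 × V2 → V1 × V2 := fun p => (ℓ p.1 p.2, lab (ℓ p.1 p.2) p.1)
  let f : V1 × V2 → Sym2 (V1 × V2) := fun p =>
    if (p ∈ Z ↔ σ p ∈ Z) then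
      (if p ∈ Z then s(σ p, ((σ p).1, outZ (σ p).1)) else s((p.1, inZ p.1), p))
    else s(p, σ p)
  have hYD : (edgeBoundary G Y).ncard ≤ D.ncard := by
    refine (ncard_le_ncard (t := (fun p : V1 × V2 => s(p.1, ℓ p.1 p.2)) '' D) ?_).trans
      (ncard_image_le (toFinite D))
    rintro _ ⟨he, x, hx, y, hy, rfl⟩
    exact ⟨(x, lab x y), ⟨hx, by rwa [hlab x y he]⟩, by simp [hlab x y he]⟩
  have hσ : ∀ p, (replacementProduct G ⊤ ℓ).Adj p (σ p) := fun p =>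
    Or.inr ⟨hℓ.2 _ _, rfl, hlab _ _ (hℓ.2 _ _).symm⟩
  have hσinj : ∀ p p', σ p = σ p' → p = p' := by
    rintro ⟨x, i⟩ ⟨x', i'⟩ h
    obtain ⟨hy, hlab'⟩ := Prod.mk.inj h
    have hx : x = x' := by
      rw [← hlab _ _ (hℓ.2 x i).symm, ← hlab _ _ (hℓ.2 x' i').symm, hlab', hy]
    subst hx
    exact congrArg _ (hℓ.1 x hy)
  refine hYD.trans (ncard_le_ncard_of_injOn f ?_ ?_)
  · rintro p ⟨hp, hσp⟩
    simp only [f]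
    split_ifs with h1 h2
    · exact mk_mem_edgeBoundary_replacementProduct_top (h1.1 h2) (houtZ _ hσp)
    · exact mk_mem_edgeBoundary_replacementProduct_top (hinZ _ hp) h2
    · exact mk_mem_edgeBoundary (hσ p) (by tauto)
  -- The three branches of `f` give edges between two clouds, inside a cloud outside `Y` and
  -- inside a cloud of `Y`; within a branch, the edge determines `p`.
  · rintro p ⟨hp, hσp⟩ p' ⟨hp', hσp'⟩ h
    simp only [f] at h
    have hσ1 : ∀ p, (σ p).1 = ℓ p.1 p.2 := fun _ => rfl
    clear_value σ
    split_ifs at h <;> rw [Sym2.eq_iff] at h <;> grind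

lemma edgeConn_le_ncard_edgeBoundary_replacementProduct_top [Finite V1] [Nontrivial V1]
    [Finite V2] (hℓ : IsRPLabelling G ℓ) (lab : V1 → V1 → V2)
    (hlab : ∀ x y, G.Adj x y → ℓ x (lab x y) = y) {Z : Set (V1 × V2)} (hZ : Z.Nonempty)
    (hZc : Zᶜ.Nonempty) : edgeConn G ≤ (edgeBoundary (replacementProduct G ⊤ ℓ) Z).ncard := by
  obtain ⟨⟨a, i⟩, ha⟩ := hZ
  obtain ⟨⟨b, j⟩, hb⟩ := hZc
  have : Nonempty V2 := ⟨i⟩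
  by_cases hfull : ∃ x, ∀ k, (x, k) ∈ Z
  · obtain ⟨x, hx⟩ := hfull
    calc edgeConn G ≤ (edgeBoundary G {y | ∀ k, (y, k) ∈ Z}).ncard :=
          edgeConn_le_ncard_edgeBoundary_s5 (a := x) (b := b) hx fun h => hb (h j)
      _ ≤ _ := ncard_edgeBoundary_le_replacementProduct_top hℓ lab hlab
          (fun y hy => ⟨i, hy i⟩) fun y hy => by simpa using hy
  · push Not at hfull
    obtain ⟨b', hb'⟩ := exists_ne a
    calc edgeConn G ≤ (edgeBoundary G {a}).ncard :=
          edgeConn_le_ncard_edgeBoundary_s5 (mem_singleton a) hb'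
      _ ≤ _ := ncard_edgeBoundary_le_replacementProduct_top hℓ lab hlab
          (fun y hy => ⟨i, (mem_singleton_iff.1 hy) ▸ ha⟩) fun y _ => hfull y

end ReplacementProduct

/-- Corollary 3.4. For any `n`-regular connected graph `G`,
`λ(G ® K_n) = λ(G)`, where `K_n` is the complete graph on `n` vertices. -/
theorem edgeConn_replacementProduct_complete
    {V1 V2 : Type*} [Fintype V1] [Fintype V2] {n : ℕ}
    (G : SimpleGraph V1) (ℓ : V1 → V2 → V1)
    (hℓ : IsRPLabelling G ℓ)
    (hconn : G.Connected)
    (hreg : ∀ x : V1, (G.neighborSet x).ncard = n)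
    (hcard : Fintype.card V2 = n) :
    edgeConn (replacementProduct G (⊤ : SimpleGraph V2) ℓ) = edgeConn G := by
  have hdeg : ∀ x, (G.neighborSet x).ncard = Nat.card V2 := by
    simp [hreg, hcard, Nat.card_eq_fintype_card]
  obtain ⟨x⟩ := hconn.nonempty
  rcases subsingleton_or_nontrivial V1 with hV1 | hV1
  · have hx : G.neighborSet x = ∅ :=
      eq_empty_of_forall_notMem fun y (hy : G.Adj x y) => hy.ne (Subsingleton.elim x y)
    have : IsEmpty V2 := by
      rw [← Finite.card_eq_zero_iff, ← hdeg x, hx, ncard_empty]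
    rw [edgeConn_eq_zero_of_subsingleton_s5, edgeConn_eq_zero_of_subsingleton_s5]
  obtain ⟨y, hxy⟩ := hconn.preconnected.exists_adj_of_nontrivial x
  have : Nonempty V2 := ⟨(hℓ.exists_label (hdeg x) hxy).choose⟩
  choose! lab hlab using fun x y (h : G.Adj x y) => hℓ.exists_label (hdeg x) h
  refine le_antisymm (le_edgeConn fun Y hY hYc => ?_)
    (le_edgeConn fun Z hZ hZc =>
      edgeConn_le_ncard_edgeBoundary_replacementProduct_top hℓ lab hlab hZ hZc)
  obtain ⟨a, ha⟩ := hY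
  obtain ⟨b, hb⟩ := hYc
  let i := Classical.arbitrary V2
  calc edgeConn (replacementProduct G ⊤ ℓ)
      _ ≤ (edgeBoundary (replacementProduct G ⊤ ℓ) (Y ×ˢ univ)).ncard :=
        edgeConn_le_ncard_edgeBoundary_s5 (a := (a, i)) (b := (b, i)) ⟨ha, mem_univ i⟩ fun h => hb h.1
      _ ≤ (edgeBoundary G Y).ncard := ncard_edgeBoundary_prod_univ_le ⊤ hℓ.1 Y
end

section
/- For any 2-connected n-regular graph G, λ(G®C_n) = min{λ(G), 3}, where C_n is the cycle on n vertices. -/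
/-!
Upper bound: a minimum edge cut of `G` lifts to an edge cut of `G ® Cₙ` that is no larger, because
every edge of `G` is the projection of at most one edge between two clouds `{x} × Cₙ`; and every
vertex of `G ® Cₙ` has degree at most `3`.

Lower bound: delete a set `F` of fewer than `min (λ G) 3` edges. If every cloud stays connected,
then `G` minus the projection of `F` is connected (it loses fewer than `λ G` edges) and the clouds
are joined along its edges. Otherwise `F` cuts some cloud `{x} × Cₙ`; since `Cₙ` is 2-edge-connected
for `n ≥ 3` (and `λ G ≤ n`, so `|F| ≤ 1` when `n = 2`), all of `F` lies inside that cloud. The rest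
of the product stays connected because `G - x` is connected, and every vertex of the cut cloud keeps
its edge leaving the cloud.
-/

open SimpleGraph

open Function

lemma Sym2.fst_eq_of_mem_map_mk {α β : Type*} {x : α} {e : Sym2 β} {p : α × β}
    (h : p ∈ e.map (Prod.mk x)) : p.1 = x := by
  obtain ⟨i, -, rfl⟩ := Sym2.mem_map.1 h
  rfl

namespace SimpleGraph

variable {V W : Type*} {G : SimpleGraph V} {H : SimpleGraph W}

lemma Reachable.lift (f : V → W) (hf : ∀ a b, G.Adj a b → H.Reachable (f a) (f b)) {a b : V}
    (h : G.Reachable a b) : H.Reachable (f a) (f b) := by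
  rw [reachable_iff_reflTransGen] at h ⊢
  exact Relation.ReflTransGen.lift' f
    (fun a b hab => (reachable_iff_reflTransGen _ _).1 (hf a b hab)) a b h

-- `cycleGraph 2` is a single edge: only cycles of length at least `3` are 2-edge-connected.
lemma isEdgeConnected_cycleGraph (n : ℕ) : (cycleGraph n).IsEdgeConnected (min n 3 - 1) := by
  match n with
  | 0 | 1 => exact IsEdgeConnected.of_subsingleton
  | 2 => exact isEdgeConnected_one.2 cycleGraph_preconnected
  | m + 3 =>
    have hsupp (v : Fin (m + 3)) : v ∈ (cycleGraph.cycle m).support := by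
      convert (cycleGraph.cycle m).getVert_mem_support (m + 3 - v)
      rw [cycleGraph.getVert_cycle (by omega)]
      ext
      simp [Nat.sub_sub_self v.isLt.le, Nat.mod_eq_of_lt v.isLt]
    rw [show min (m + 3) 3 - 1 = 2 by omega]
    exact fun u v => cycleGraph.isCycle_cycle.isTrail.isEdgeReachable_two (hsupp u) (hsupp v)

lemma ncard_neighborSet_cycleGraph_le {n : ℕ} (i : Fin n) :
    ((cycleGraph n).neighborSet i).ncard ≤ 2 := by
  match n with
  | 1 => simp [cycleGraph_one_eq_bot]
  | m + 2 =>
    rw [cycleGraph_neighborSet]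
    exact (Set.ncard_insert_le _ _).trans (by simp)

end SimpleGraph

section Connectivity

variable {V : Type*} {G : SimpleGraph V}

lemma edgeConn_le_ncard {F : Set (Sym2 V)} (hF : F ⊆ G.edgeSet)
    (h : ¬(G.deleteEdges F).Connected) : edgeConn G ≤ F.ncard :=
  Nat.sInf_le ⟨F, hF, rfl, h⟩

lemma not_connected_deleteEdges_incidenceSet [Nontrivial V] (x : V) :
    ¬(G.deleteEdges (G.incidenceSet x)).Connected := fun h => by
  obtain ⟨y, hy⟩ := h.preconnected.exists_adj_of_nontrivial x
  rw [deleteEdges_adj] at hy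
  exact hy.2 ⟨hy.1, Sym2.mem_mk_left x y⟩

lemma edgeConn_le_ncard_neighborSet [Nontrivial V] (x : V) :
    edgeConn G ≤ (G.neighborSet x).ncard := by
  calc edgeConn G ≤ (G.incidenceSet x).ncard :=
        edgeConn_le_ncard (G.incidenceSet_subset x) (not_connected_deleteEdges_incidenceSet x)
    _ = (G.neighborSet x).ncard := by
        classical
        simpa only [Nat.card_coe_set_eq] using Nat.card_congr (G.incidenceSetEquivNeighborSet x)

lemma le_edgeConn_of_forall [Nontrivial V] {k : ℕ}
    (h : ∀ F ⊆ G.edgeSet, ¬(G.deleteEdges F).Connected → k ≤ F.ncard) : k ≤ edgeConn G := by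
  obtain ⟨x⟩ := (inferInstance : Nonempty V)
  refine le_csInf ⟨_, _, G.incidenceSet_subset x, rfl, not_connected_deleteEdges_incidenceSet x⟩ ?_
  rintro _ ⟨F, hF, rfl, hdisc⟩
  exact h F hF hdisc

lemma connected_deleteEdges_of_ncard_lt_edgeConn [Finite V] {F : Set (Sym2 V)}
    (h : F.ncard < edgeConn G) : (G.deleteEdges F).Connected := by
  by_contra hdisc
  have hle : edgeConn G ≤ (F ∩ G.edgeSet).ncard :=
    edgeConn_le_ncard Set.inter_subset_right (by rwa [← deleteEdges_eq_inter_edgeSet])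
  have := Set.ncard_le_ncard (Set.inter_subset_left (s := F) (t := G.edgeSet))
  omega

lemma connected_induce_compl_of_ncard_lt_vertexConn {S : Set V} (h : S.ncard < vertexConn G) :
    (G.induce Sᶜ).Connected ∧ 1 < Sᶜ.ncard := by
  by_contra hS
  have : vertexConn G ≤ S.ncard :=
    Nat.sInf_le ⟨S, rfl, (not_and_or.1 hS).imp_right Nat.le_of_not_lt⟩
  omega

end Connectivity

section ReplacementProduct

variable {V₁ V₂ : Type*} {G₁ : SimpleGraph V₁} {G₂ : SimpleGraph V₂} {ℓ : V₁ → V₂ → V₁}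

lemma IsRPLabelling.exists_apply_eq [Finite V₁] (hℓ : IsRPLabelling G₁ ℓ)
    (hreg : ∀ x, (G₁.neighborSet x).ncard = Nat.card V₂) {x y : V₁} (hxy : G₁.Adj x y) :
    ∃ i, ℓ x i = y := by
  have hrange : Set.range (ℓ x) = G₁.neighborSet x :=
    Set.eq_of_subset_of_ncard_le (Set.range_subset_iff.2 (hℓ.2 x))
      (by rw [hreg, Set.ncard_range_of_injective (hℓ.1 x)]) (Set.toFinite _)
  exact hrange.symm.subset hxy

lemma ncard_neighborSet_replacementProduct_le [Finite V₂] (hℓ : ∀ x, Injective (ℓ x))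
    (p : V₁ × V₂) :
    ((replacementProduct G₁ G₂ ℓ).neighborSet p).ncard ≤ (G₂.neighborSet p.2).ncard + 1 := by
  set C := {q : V₁ × V₂ | ℓ p.1 p.2 = q.1 ∧ ℓ q.1 q.2 = p.1}
  have hC : C.Subsingleton := by
    rintro ⟨y, j⟩ ⟨rfl, hj⟩ ⟨y', j'⟩ ⟨rfl, hj'⟩
    exact congrArg _ (hℓ _ (hj.trans hj'.symm))
  have hsub :
      (replacementProduct G₁ G₂ ℓ).neighborSet p ⊆ Prod.mk p.1 '' G₂.neighborSet p.2 ∪ C := by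
    rintro ⟨y, j⟩ (⟨rfl, hj⟩ | ⟨-, hC⟩)
    exacts [Or.inl ⟨j, hj, rfl⟩, Or.inr hC]
  calc _ ≤ (Prod.mk p.1 '' G₂.neighborSet p.2 ∪ C).ncard :=
        Set.ncard_le_ncard hsub (((Set.toFinite _).image _).union hC.finite)
    _ ≤ (Prod.mk p.1 '' G₂.neighborSet p.2).ncard + C.ncard := Set.ncard_union_le _ _
    _ ≤ (G₂.neighborSet p.2).ncard + 1 := add_le_add (Set.ncard_image_le (Set.toFinite _))
        ((Set.ncard_le_one hC.finite).2 fun _ ha _ hb => hC ha hb)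

lemma injOn_map_fst_replacementProduct (hℓ : ∀ x, Injective (ℓ x)) :
    Set.InjOn (Sym2.map Prod.fst)
      {e ∈ (replacementProduct G₁ G₂ ℓ).edgeSet | ¬(e.map Prod.fst).IsDiag} := by
  have cross {p q : V₁ × V₂} (hpq : (replacementProduct G₁ G₂ ℓ).Adj p q) (hd : p.1 ≠ q.1) :
      ℓ p.1 p.2 = q.1 ∧ ℓ q.1 q.2 = p.1 :=
    (hpq.resolve_left fun h => hd h.1).2
  rintro e ⟨he, hd⟩ e' ⟨he', hd'⟩ h
  induction e with | _ p q =>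
  induction e' with | _ p' q' =>
  rw [Sym2.map_mk, Sym2.mk_isDiag_iff] at hd hd'
  obtain ⟨hpq, hqp⟩ := cross he hd
  obtain ⟨hpq', hqp'⟩ := cross he' hd'
  rw [Sym2.map_mk, Sym2.map_mk, Sym2.eq_iff] at h
  rcases h with ⟨h1, h2⟩ | ⟨h1, h2⟩
  · have hp : p = p' := Prod.ext h1 (hℓ p.1 (by rw [hpq, h2, ← hpq', h1]))
    have hq : q = q' := Prod.ext h2 (hℓ q.1 (by rw [hqp, h1, ← hqp', h2]))
    rw [hp, hq]
  · have hp : p = q' := Prod.ext h1 (hℓ p.1 (by rw [hpq, h2, ← hqp', h1]))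
    have hq : q = p' := Prod.ext h2 (hℓ q.1 (by rw [hqp, h1, ← hpq', h2]))
    rw [hp, hq, Sym2.eq_swap]

lemma edgeConn_replacementProduct_le [Finite V₁] [Nontrivial V₁] [Nonempty V₂]
    (hℓ : ∀ x, Injective (ℓ x)) :
    edgeConn (replacementProduct G₁ G₂ ℓ) ≤ edgeConn G₁ := by
  refine le_edgeConn_of_forall fun F hF hdisc => ?_
  set R := replacementProduct G₁ G₂ ℓ
  set F' := {e ∈ R.edgeSet | e.map Prod.fst ∈ F}
  have hdisc' : ¬(R.deleteEdges F').Connected := fun hconn => hdisc <| by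
    obtain ⟨i⟩ := (inferInstance : Nonempty V₂)
    refine (connected_iff _).2 ⟨fun u v => ?_, inferInstance⟩
    refine (hconn.preconnected (u, i) (v, i)).lift Prod.fst fun p q hpq => ?_
    obtain ⟨hR, hnot⟩ := deleteEdges_adj.1 hpq
    rcases hR with ⟨heq, -⟩ | ⟨hG, -⟩
    · exact heq ▸ .rfl
    · exact (deleteEdges_adj.2 ⟨hG, fun hF => hnot ⟨deleteEdges_le _ hpq, hF⟩⟩).reachable
  have hinj : Set.InjOn (Sym2.map Prod.fst) F' :=
    (injOn_map_fst_replacementProduct hℓ).mono fun _ he =>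
      Set.mem_sep he.1 (G₁.not_isDiag_of_mem_edgeSet (hF he.2))
  calc edgeConn R ≤ F'.ncard := edgeConn_le_ncard (Set.sep_subset _ _) hdisc'
    _ ≤ F.ncard := Set.ncard_le_ncard_of_injOn (Sym2.map Prod.fst) (fun e he => he.2) hinj

lemma reachable_deleteEdges_of_preconnected_cloud {F : Set (Sym2 (V₁ × V₂))} {x : V₁}
    (h : (G₂.deleteEdges (Sym2.map (Prod.mk x) ⁻¹' F)).Preconnected) (i j : V₂) :
    ((replacementProduct G₁ G₂ ℓ).deleteEdges F).Reachable (x, i) (x, j) :=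
  (h i j).map ⟨Prod.mk x, fun hij => deleteEdges_adj.2
    ⟨Or.inl ⟨rfl, (deleteEdges_adj.1 hij).1⟩, (deleteEdges_adj.1 hij).2⟩⟩

lemma reachable_deleteEdges_of_adj (hsurj : ∀ {x y}, G₁.Adj x y → ∃ i, ℓ x i = y)
    {F : Set (Sym2 (V₁ × V₂))} {x y : V₁} (hxy : G₁.Adj x y) (hF : ∀ i j, s((x, i), (y, j)) ∉ F)
    (hx : ∀ i j, ((replacementProduct G₁ G₂ ℓ).deleteEdges F).Reachable (x, i) (x, j))
    (hy : ∀ i j, ((replacementProduct G₁ G₂ ℓ).deleteEdges F).Reachable (y, i) (y, j))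
    (i j : V₂) : ((replacementProduct G₁ G₂ ℓ).deleteEdges F).Reachable (x, i) (y, j) := by
  obtain ⟨a, ha⟩ := hsurj hxy
  obtain ⟨b, hb⟩ := hsurj hxy.symm
  have hcross : ((replacementProduct G₁ G₂ ℓ).deleteEdges F).Adj (x, a) (y, b) :=
    deleteEdges_adj.2 ⟨Or.inr ⟨hxy, ha, hb⟩, hF a b⟩
  exact (hx i a).trans (hcross.reachable.trans (hy b j))

lemma preconnected_deleteEdges_of_preconnected_clouds
    (hsurj : ∀ {x y}, G₁.Adj x y → ∃ i, ℓ x i = y) {F : Set (Sym2 (V₁ × V₂))}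
    (hclouds : ∀ x, (G₂.deleteEdges (Sym2.map (Prod.mk x) ⁻¹' F)).Preconnected)
    (hquot : (G₁.deleteEdges (Sym2.map Prod.fst '' F)).Preconnected) :
    ((replacementProduct G₁ G₂ ℓ).deleteEdges F).Preconnected := by
  have hcloud (x : V₁) :=
    reachable_deleteEdges_of_preconnected_cloud (G₁ := G₁) (ℓ := ℓ) (hclouds x)
  rintro ⟨u, i⟩ ⟨v, j⟩
  refine (hcloud u i j).trans ((hquot u v).lift (fun z => (z, j)) fun z z' hzz' => ?_)
  obtain ⟨hG, hnot⟩ := deleteEdges_adj.1 hzz'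
  exact reachable_deleteEdges_of_adj hsurj hG (fun a b hab => hnot ⟨_, hab, rfl⟩)
    (hcloud z) (hcloud z') j j

lemma connected_deleteEdges_range_map_mk (hℓ : IsRPLabelling G₁ ℓ)
    (hsurj : ∀ {x y}, G₁.Adj x y → ∃ i, ℓ x i = y) (hG₂ : G₂.Connected) {x : V₁}
    (hx : (G₁.induce {x}ᶜ).Connected) :
    ((replacementProduct G₁ G₂ ℓ).deleteEdges (Set.range (Sym2.map (Prod.mk x)))).Connected := by
  set H := (replacementProduct G₁ G₂ ℓ).deleteEdges (Set.range (Sym2.map (Prod.mk x)))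
  have hfst {p q : V₁ × V₂} (h : s(p, q) ∈ Set.range (Sym2.map (Prod.mk x))) : p.1 = x := by
    obtain ⟨e, he⟩ := h
    exact Sym2.fst_eq_of_mem_map_mk (he ▸ Sym2.mem_mk_left p q)
  have hcloud {z : V₁} (hz : z ≠ x) (i j : V₂) : H.Reachable (z, i) (z, j) :=
    (hG₂.preconnected i j).map
      ⟨Prod.mk z, fun hij => deleteEdges_adj.2 ⟨Or.inl ⟨rfl, hij⟩, fun h => hz (hfst h)⟩⟩
  have hexit (p : V₁ × V₂) : ∃ z ≠ x, ∃ i, H.Reachable p (z, i) := by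
    by_cases hp : p.1 = x
    · have hadj := hℓ.2 p.1 p.2
      obtain ⟨b, hb⟩ := hsurj hadj.symm
      refine ⟨ℓ p.1 p.2, hp ▸ hadj.ne', b,
        (deleteEdges_adj.2 ⟨Or.inr ⟨hadj, rfl, hb⟩, ?_⟩).reachable⟩
      rw [Sym2.eq_swap]
      exact fun h => hadj.ne' (hp ▸ hfst h)
    · exact ⟨p.1, hp, p.2, .rfl⟩
  have hmain (z z' : ({x}ᶜ : Set V₁)) (i j : V₂) : H.Reachable (z, i) (z', j) :=
    (hcloud z.2 i j).trans <| (hx.preconnected z z').lift (fun w : ({x}ᶜ : Set V₁) => (w.1, j))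
      fun w w' hww' => reachable_deleteEdges_of_adj hsurj hww' (fun _ _ h => w.2 (hfst h))
        (hcloud w.2) (hcloud w'.2) j j
  obtain ⟨z⟩ := hx.nonempty
  obtain ⟨i⟩ := hG₂.nonempty
  refine (connected_iff _).2 ⟨fun p q => ?_, ⟨((z : V₁), i)⟩⟩
  obtain ⟨w, hw, a, hpw⟩ := hexit p
  obtain ⟨w', hw', b, hqw'⟩ := hexit q
  exact hpw.trans ((hmain ⟨w, hw⟩ ⟨w', hw'⟩ a b).trans hqw'.symm)

end ReplacementProduct

lemma connected_deleteEdges_replacementProduct_cycleGraph {V : Type*} [Finite V] [Nontrivial V]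
    {n : ℕ} [NeZero n] {G : SimpleGraph V} {ℓ : V → Fin n → V} (hℓ : IsRPLabelling G ℓ)
    (hreg : ∀ x, (G.neighborSet x).ncard = n) (hcut : ∀ x, (G.induce {x}ᶜ).Connected)
    {F : Set (Sym2 (V × Fin n))} (hF : F.ncard < min (edgeConn G) 3) :
    ((replacementProduct G (cycleGraph n) ℓ).deleteEdges F).Connected := by
  obtain ⟨m, rfl⟩ := Nat.exists_eq_succ_of_ne_zero (NeZero.ne n)
  have hsurj {x y : V} (h : G.Adj x y) : ∃ i, ℓ x i = y :=
    hℓ.exists_apply_eq (by simpa using hreg) h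
  have hdeg : edgeConn G ≤ m + 1 :=
    (edgeConn_le_ncard_neighborSet (Classical.arbitrary V)).trans_eq (hreg _)
  by_cases hclouds :
      ∀ x, ((cycleGraph (m + 1)).deleteEdges (Sym2.map (Prod.mk x) ⁻¹' F)).Preconnected
  · have hquot : (G.deleteEdges (Sym2.map Prod.fst '' F)).Connected :=
      connected_deleteEdges_of_ncard_lt_edgeConn
        ((Set.ncard_image_le (Set.toFinite F)).trans_lt (by omega))
    obtain ⟨x⟩ := hquot.nonempty
    exact (connected_iff _).2
      ⟨preconnected_deleteEdges_of_preconnected_clouds hsurj hclouds hquot.preconnected, ⟨(x, 0)⟩⟩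
  push Not at hclouds
  obtain ⟨x, hx⟩ := hclouds
  have hFx : F ⊆ Set.range (Sym2.map (Prod.mk x)) := by
    intro f hf
    by_contra hfx
    refine hx fun i j => isEdgeConnected_cycleGraph (m + 1) i j ?_
    have hle : (Sym2.map (Prod.mk x) ⁻¹' F).ncard ≤ (F \ {f}).ncard :=
      Set.ncard_le_ncard_of_injOn _ (fun e he => ⟨he, fun h => hfx (h ▸ ⟨e, rfl⟩)⟩)
        (Sym2.map.injective (Prod.mk_right_injective x)).injOn
    rw [Set.ncard_sdiff_singleton_of_mem hf] at hle
    have hpos := (Set.ncard_pos (Set.toFinite F)).2 ⟨f, hf⟩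
    rw [← (Set.toFinite _).cast_ncard_eq]
    exact_mod_cast (by omega : (Sym2.map (Prod.mk x) ⁻¹' F).ncard < min (m + 1) 3 - 1)
  exact (connected_deleteEdges_range_map_mk hℓ hsurj cycleGraph_connected (hcut x)).mono
    (deleteEdges_anti hFx)

/-- Corollary 3.5. For any 2-connected `n`-regular graph `G`,
`λ(G ® C_n) = min {λ(G), 3}`, where `C_n` is the cycle on `n` vertices. -/
theorem edgeConn_replacementProduct_cycle
    {V : Type*} [Fintype V] {n : ℕ}
    (G : SimpleGraph V) (ℓ : V → Fin n → V)
    (hℓ : IsRPLabelling G ℓ)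
    (h2conn : 2 ≤ vertexConn G)
    (hreg : ∀ x : V, (G.neighborSet x).ncard = n) :
    edgeConn (replacementProduct G (SimpleGraph.cycleGraph n) ℓ) = min (edgeConn G) 3 := by
  obtain ⟨hconn, hcard⟩ := connected_induce_compl_of_ncard_lt_vertexConn (G := G) (S := ∅)
    (by rw [Set.ncard_empty]; omega)
  rw [Set.compl_empty] at hconn hcard
  rw [Set.ncard_univ] at hcard
  have : Nontrivial V := Finite.one_lt_card_iff_nontrivial.1 hcard
  have hcut (x : V) : (G.induce {x}ᶜ).Connected :=
    (connected_induce_compl_of_ncard_lt_vertexConn (G := G) (by rw [Set.ncard_singleton]; omega)).1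
  obtain ⟨x⟩ := (inferInstance : Nonempty V)
  have : NeZero n := ⟨by
    obtain ⟨y, hy⟩ :=
      ((induceUnivIso G).connected_iff.1 hconn).preconnected.exists_adj_of_nontrivial x
    exact (hreg x ▸ (Set.ncard_pos (Set.toFinite _)).2 ⟨y, hy⟩).ne'⟩
  refine le_antisymm (le_min (edgeConn_replacementProduct_le hℓ.1) ?_) ?_
  · calc _ ≤ _ := edgeConn_le_ncard_neighborSet (x, 0)
      _ ≤ _ := ncard_neighborSet_replacementProduct_le hℓ.1 _
      _ ≤ 2 + 1 := Nat.add_le_add_right (ncard_neighborSet_cycleGraph_le _) 1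
  · exact le_edgeConn_of_forall fun F _ hdisc => not_lt.1 fun hF =>
      hdisc (connected_deleteEdges_replacementProduct_cycleGraph hℓ hreg hcut hF)
end

section
/- Let G1 be a connected δ1-regular graph on n vertices and G2 be a connected δ2-regular graph on δ1 vertices, and write λ1 = λ(G1). Then λ'(G1®G2) ≤ min{λ1, 2δ2}. -/
open SimpleGraph

/-!
A minimum edge-cut `F` of `G1` lifts to the edges of `G1 ® G2` lying over `F`, one matching
edge per edge of `F`: deleting them leaves every cloud `{x} × V2` intact, so no vertex becomes
isolated, while the projection to `G1` shows that the product falls apart. For a matching edge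
`uv`, deleting the `2 δ2` cloud edges at `u` and `v` cuts off the single edge `uv`, and every other
vertex keeps its own matching edge. When `δ2 = 0` every vertex has exactly one neighbour, so only
the empty set could be a restricted edge-cut and `λ'` is `0` (possibly as `sInf ∅`).
-/

namespace SimpleGraph

variable {V W : Type*} {G : SimpleGraph V} {H : SimpleGraph W}

theorem Reachable.map_of_adj_reachable {f : V → W}
    (hf : ∀ u v, G.Adj u v → H.Reachable (f u) (f v)) {u v : V} (h : G.Reachable u v) :
    H.Reachable (f u) (f v) := by
  rw [reachable_eq_reflTransGen] at h ⊢
  exact h.lift' f fun a b hab => (reachable_iff_reflTransGen _ _).1 (hf a b hab)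

theorem Connected.of_surjective_of_adj_reachable {f : V → W} (hsurj : Function.Surjective f)
    (hf : ∀ u v, G.Adj u v → H.Reachable (f u) (f v)) (hG : G.Connected) : H.Connected := by
  refine (connected_iff H).2 ⟨fun a b => ?_, hG.nonempty.map f⟩
  obtain ⟨u, rfl⟩ := hsurj a
  obtain ⟨v, rfl⟩ := hsurj b
  exact (hG.preconnected u v).map_of_adj_reachable hf

theorem Reachable.mem_of_adj_mem {S : Set V} (hS : ∀ u v, G.Adj u v → u ∈ S → v ∈ S)
    {u v : V} (h : G.Reachable u v) (hu : u ∈ S) : v ∈ S := by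
  rw [reachable_iff_reflTransGen] at h
  induction h with
  | refl => exact hu
  | tail _ hbc ih => exact hS _ _ hbc ih

end SimpleGraph

section Connectivity

variable {V : Type*} {G : SimpleGraph V} {F : Set (Sym2 V)}

theorem IsRestrictedEdgeCut.restrictedEdgeConn_le (hF : IsRestrictedEdgeCut G F) :
    restrictedEdgeConn G ≤ F.ncard :=
  Nat.sInf_le ⟨F, hF, rfl⟩

theorem IsRestrictedEdgeCut.eq_empty_of_neighborSet_subsingleton
    (hG : ∀ v, (G.neighborSet v).Subsingleton) (hF : IsRestrictedEdgeCut G F) : F = ∅ := by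
  refine Set.eq_empty_iff_forall_notMem.2 fun e he => ?_
  induction e using Sym2.ind with
  | _ u v =>
  obtain ⟨w, hw⟩ := hF.2.2 u
  rw [deleteEdges_adj] at hw
  obtain rfl : w = v := hG u hw.1 (hF.1 he)
  exact hw.2 he

theorem restrictedEdgeConn_eq_zero_of_neighborSet_subsingleton
    (hG : ∀ v, (G.neighborSet v).Subsingleton) : restrictedEdgeConn G = 0 := by
  refine Nat.sInf_eq_zero.2 (or_iff_not_imp_right.2 fun hne => ?_)
  obtain ⟨_, F, hF, rfl⟩ := Set.nonempty_iff_ne_empty.2 hne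
  exact ⟨F, hF, by rw [hF.eq_empty_of_neighborSet_subsingleton hG, Set.ncard_empty]⟩

theorem exists_edgeCut_ncard_eq_edgeConn [Nontrivial V] (G : SimpleGraph V) :
    ∃ F ⊆ G.edgeSet, F.ncard = edgeConn G ∧ ¬(G.deleteEdges F).Connected :=
  Nat.sInf_mem (s := {k | ∃ F ⊆ G.edgeSet, F.ncard = k ∧ ¬(G.deleteEdges F).Connected})
    ⟨_, G.edgeSet, subset_rfl, rfl, by simpa using not_connected_bot⟩

end Connectivity

section ReplacementProduct

variable {V1 V2 : Type*} {G1 : SimpleGraph V1} {G2 : SimpleGraph V2} {ℓ : V1 → V2 → V1}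
  {p q : V1 × V2}

theorem replacementProduct_adj_of_fst_ne (h : (replacementProduct G1 G2 ℓ).Adj p q)
    (hne : p.1 ≠ q.1) : ℓ p.1 p.2 = q.1 ∧ ℓ q.1 q.2 = p.1 :=
  (h.resolve_left fun h => hne h.1).2

theorem replacementProduct_eq_of_adj_of_fst_ne (hinj : ∀ x, Function.Injective (ℓ x))
    {p' q' : V1 × V2} (h : (replacementProduct G1 G2 ℓ).Adj p q)
    (h' : (replacementProduct G1 G2 ℓ).Adj p' q') (hne : p.1 ≠ q.1) (hp : p.1 = p'.1)
    (hq : q.1 = q'.1) : p = p' := by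
  have e := (replacementProduct_adj_of_fst_ne h hne).1
  have e' := (replacementProduct_adj_of_fst_ne h' (hp ▸ hq ▸ hne)).1
  exact Prod.ext hp (hinj p.1 (by rw [e, hq, ← e', ← hp]))

theorem replacementProduct_adj_unique (hinj : ∀ x, Function.Injective (ℓ x)) {q' : V1 × V2}
    (h : (replacementProduct G1 G2 ℓ).Adj p q) (h' : (replacementProduct G1 G2 ℓ).Adj p q')
    (hne : p.1 ≠ q.1) (hne' : p.1 ≠ q'.1) : q = q' :=
  replacementProduct_eq_of_adj_of_fst_ne hinj h.symm h'.symm hne.symm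
    (by rw [← (replacementProduct_adj_of_fst_ne h hne).1,
      (replacementProduct_adj_of_fst_ne h' hne').1]) rfl

theorem replacementProduct_neighborSet_subsingleton (hinj : ∀ x, Function.Injective (ℓ x))
    (hG2 : G2 = ⊥) (p : V1 × V2) :
    ((replacementProduct G1 G2 ℓ).neighborSet p).Subsingleton := by
  subst hG2
  have hne : ∀ q, (replacementProduct G1 ⊥ ℓ).Adj p q → p.1 ≠ q.1 := by
    rintro q (⟨-, h⟩ | ⟨h, -⟩)
    · exact h.elim
    · exact h.ne
  exact fun q hq q' hq' => replacementProduct_adj_unique hinj hq hq' (hne q hq) (hne q' hq')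

theorem IsRPLabelling.range_eq_neighborSet [Finite V1] (hℓ : IsRPLabelling G1 ℓ)
    (hreg : ∀ x, (G1.neighborSet x).ncard = Nat.card V2) (x : V1) :
    Set.range (ℓ x) = G1.neighborSet x := by
  refine Set.eq_of_subset_of_ncard_le (Set.range_subset_iff.2 (hℓ.2 x)) ?_
  rw [hreg, ← Set.image_univ, Set.ncard_image_of_injective _ (hℓ.1 x), Set.ncard_univ]

theorem IsRPLabelling.exists_replacementProduct_adj_fst_ne [Finite V1]
    (hℓ : IsRPLabelling G1 ℓ) (hreg : ∀ x, (G1.neighborSet x).ncard = Nat.card V2)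
    (p : V1 × V2) : ∃ q, (replacementProduct G1 G2 ℓ).Adj p q ∧ p.1 ≠ q.1 := by
  have hp := hℓ.2 p.1 p.2
  obtain ⟨j, hj⟩ : p.1 ∈ Set.range (ℓ (ℓ p.1 p.2)) := by
    rw [hℓ.range_eq_neighborSet hreg]
    exact hp.symm
  exact ⟨(ℓ p.1 p.2, j), Or.inr ⟨hp, rfl, hj⟩, hp.ne⟩

variable (G1 G2 ℓ) in
def liftEdges (F : Set (Sym2 V1)) : Set (Sym2 (V1 × V2)) :=
  (replacementProduct G1 G2 ℓ).edgeSet ∩ Sym2.map Prod.fst ⁻¹' F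

theorem isRestrictedEdgeCut_liftEdges [Nonempty V2] (hG2 : ∀ i, ∃ j, G2.Adj i j)
    {F : Set (Sym2 V1)} (hF : F ⊆ G1.edgeSet) (hcut : ¬(G1.deleteEdges F).Connected) :
    IsRestrictedEdgeCut (replacementProduct G1 G2 ℓ) (liftEdges G1 G2 ℓ F) := by
  refine ⟨Set.inter_subset_left,
    fun hconn => hcut (hconn.of_surjective_of_adj_reachable Prod.fst_surjective ?_),
    fun p => ?_⟩
  · intro p q hpq
    rw [deleteEdges_adj] at hpq
    by_cases h : p.1 = q.1
    · rw [h]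
    · have hadj := (hpq.1.resolve_left fun h' => h h'.1).1
      exact (deleteEdges_adj.2 ⟨hadj, fun hmem => hpq.2 ⟨hpq.1, hmem⟩⟩).reachable
  · obtain ⟨j, hj⟩ := hG2 p.2
    exact ⟨(p.1, j),
      deleteEdges_adj.2 ⟨Or.inl ⟨rfl, hj⟩, fun hmem => G1.irrefl (hF hmem.2)⟩⟩

theorem ncard_liftEdges_le [Finite V1] (hinj : ∀ x, Function.Injective (ℓ x))
    {F : Set (Sym2 V1)} (hF : F ⊆ G1.edgeSet) : (liftEdges G1 G2 ℓ F).ncard ≤ F.ncard := by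
  have hinjOn : Set.InjOn (Sym2.map Prod.fst) (liftEdges G1 G2 ℓ F) := by
    rintro e ⟨he, heF⟩ e' ⟨he', -⟩ heq
    induction e using Sym2.ind with | _ p q =>
    induction e' using Sym2.ind with | _ p' q' =>
    rw [mem_edgeSet] at he he'
    have hne : p.1 ≠ q.1 := (hF heF).ne
    rw [Sym2.map_mk, Sym2.map_mk, Sym2.eq_iff] at heq
    rcases heq with ⟨hp, hq⟩ | ⟨hp, hq⟩
    · rw [replacementProduct_eq_of_adj_of_fst_ne hinj he he' hne hp hq,
        replacementProduct_eq_of_adj_of_fst_ne hinj (G1 := G1) he.symm he'.symm hne.symm hq hp]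
    · rw [replacementProduct_eq_of_adj_of_fst_ne hinj he he'.symm hne hp hq,
        replacementProduct_eq_of_adj_of_fst_ne hinj (G1 := G1) he.symm he' hne.symm hq hp,
        Sym2.eq_swap]
  rw [← hinjOn.ncard_image]
  exact Set.ncard_le_ncard ((Set.image_mono Set.inter_subset_right).trans
    (Set.image_preimage_subset _ _))

variable (G2) in
def cloudStar (p : V1 × V2) : Set (Sym2 (V1 × V2)) :=
  (fun j => s(p, (p.1, j))) '' G2.neighborSet p.2

theorem ncard_cloudStar_le [Finite V2] (p : V1 × V2) :
    (cloudStar G2 p).ncard ≤ (G2.neighborSet p.2).ncard :=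
  Set.ncard_image_le

theorem mem_cloudStar_of_adj_of_fst_eq (h : (replacementProduct G1 G2 ℓ).Adj p q)
    (heq : p.1 = q.1) : s(p, q) ∈ cloudStar G2 p := by
  obtain ⟨x, i⟩ := p
  obtain ⟨y, j⟩ := q
  obtain rfl : x = y := heq
  exact ⟨j, (h.resolve_right fun h' => h'.1.ne rfl).2, rfl⟩

theorem fst_eq_of_mem_cloudStar {p u v : V1 × V2} (h : s(u, v) ∈ cloudStar G2 p) :
    u.1 = v.1 := by
  obtain ⟨j, -, heq⟩ := h
  rcases Sym2.eq_iff.1 heq with ⟨rfl, rfl⟩ | ⟨rfl, rfl⟩ <;> rfl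

theorem isRestrictedEdgeCut_cloudStar_union [Finite V1] (hℓ : IsRPLabelling G1 ℓ)
    (hreg : ∀ x, (G1.neighborSet x).ncard = Nat.card V2) {u v : V1 × V2}
    (huv : (replacementProduct G1 G2 ℓ).Adj u v) (hne : u.1 ≠ v.1) (hu : ∃ i, G2.Adj u.2 i) :
    IsRestrictedEdgeCut (replacementProduct G1 G2 ℓ) (cloudStar G2 u ∪ cloudStar G2 v) := by
  refine ⟨?_, fun hconn => ?_, fun p => ?_⟩
  · rintro _ (⟨j, hj, rfl⟩ | ⟨j, hj, rfl⟩) <;> exact Or.inl ⟨rfl, hj⟩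
  · obtain ⟨i, hi⟩ := hu
    have hclosed : ∀ a b, ((replacementProduct G1 G2 ℓ).deleteEdges
        (cloudStar G2 u ∪ cloudStar G2 v)).Adj a b →
        a ∈ ({u, v} : Set _) → b ∈ ({u, v} : Set _) := by
      intro a b hab ha
      rw [deleteEdges_adj] at hab
      have hab1 : a.1 ≠ b.1 := fun h => hab.2 <| by
        rcases ha with rfl | rfl
        exacts [Or.inl (mem_cloudStar_of_adj_of_fst_eq hab.1 h),
          Or.inr (mem_cloudStar_of_adj_of_fst_eq hab.1 h)]
      rcases ha with rfl | rfl
      · exact Or.inr (replacementProduct_adj_unique hℓ.1 hab.1 huv hab1 hne)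
      · exact Or.inl (replacementProduct_adj_unique hℓ.1 hab.1 huv.symm hab1 hne.symm)
    rcases (hconn.preconnected u (u.1, i)).mem_of_adj_mem hclosed (Or.inl rfl) with h | h
    · exact hi.ne (Prod.ext_iff.1 h).2.symm
    · exact hne (Prod.ext_iff.1 h).1
  · obtain ⟨q, hpq, hne⟩ := hℓ.exists_replacementProduct_adj_fst_ne hreg p
    refine ⟨q, deleteEdges_adj.2 ⟨hpq, fun hmem => hne ?_⟩⟩
    rcases hmem with hmem | hmem <;> exact fst_eq_of_mem_cloudStar hmem

end ReplacementProduct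

theorem restrictedEdgeConn_replacementProduct_upper_bound_general
    {V1 V2 : Type*} [Fintype V1] [Fintype V2] {δ1 δ2 : ℕ}
    (G1 : SimpleGraph V1) (G2 : SimpleGraph V2) (ℓ : V1 → V2 → V1)
    (hℓ : IsRPLabelling G1 ℓ)
    (hc1 : G1.Connected) (hc2 : G2.Connected)
    (hr1 : ∀ x : V1, (G1.neighborSet x).ncard = δ1)
    (hr2 : ∀ i : V2, (G2.neighborSet i).ncard = δ2)
    (hd : Fintype.card V2 = δ1) :
    restrictedEdgeConn (replacementProduct G1 G2 ℓ) ≤ min (edgeConn G1) (2 * δ2) := by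
  have hreg : ∀ x, (G1.neighborSet x).ncard = Nat.card V2 := by
    simp [hr1, hd, Nat.card_eq_fintype_card]
  have := hc2.nonempty
  obtain ⟨x⟩ := hc1.nonempty
  obtain ⟨i⟩ := hc2.nonempty
  rcases Nat.eq_zero_or_pos δ2 with rfl | hδ2
  · have hG2 : G2 = ⊥ := eq_bot_iff_forall_not_adj.2 fun i j hij =>
      Set.eq_empty_iff_forall_notMem.1 ((Set.ncard_eq_zero (Set.toFinite _)).1 (hr2 i)) j hij
    rw [restrictedEdgeConn_eq_zero_of_neighborSet_subsingleton
      (replacementProduct_neighborSet_subsingleton hℓ.1 hG2)]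
    exact Nat.zero_le _
  have hG2 : ∀ i, ∃ j, G2.Adj i j := fun i =>
    Set.nonempty_of_ncard_ne_zero (s := G2.neighborSet i) (by rw [hr2]; exact hδ2.ne')
  refine le_min ?_ ?_
  · have : Nontrivial V1 := ⟨⟨x, ℓ x i, (hℓ.2 x i).ne⟩⟩
    obtain ⟨F, hF, hcard, hcut⟩ := exists_edgeCut_ncard_eq_edgeConn G1
    calc _ ≤ (liftEdges G1 G2 ℓ F).ncard :=
          (isRestrictedEdgeCut_liftEdges hG2 hF hcut).restrictedEdgeConn_le
      _ ≤ F.ncard := ncard_liftEdges_le hℓ.1 hF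
      _ = edgeConn G1 := hcard
  · obtain ⟨v, huv, hne⟩ := hℓ.exists_replacementProduct_adj_fst_ne hreg (x, i)
    calc _ ≤ (cloudStar G2 (x, i) ∪ cloudStar G2 v).ncard :=
          (isRestrictedEdgeCut_cloudStar_union hℓ hreg huv hne (hG2 i)).restrictedEdgeConn_le
      _ ≤ (G2.neighborSet i).ncard + (G2.neighborSet v.2).ncard :=
          (Set.ncard_union_le _ _).trans (add_le_add (ncard_cloudStar_le _) (ncard_cloudStar_le _))
      _ = 2 * δ2 := by rw [hr2, hr2, two_mul]

/-- Theorem 4.1. If `G1` is a connected `δ1`-regular graph on `n`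
vertices and `G2` is a connected `δ2`-regular graph on `δ1` vertices, then
`λ'(G1 ® G2) ≤ min {λ1, 2·δ2}`. -/
theorem restrictedEdgeConn_replacementProduct_upper_bound
    {V1 V2 : Type*} [Fintype V1] [Fintype V2] {n δ1 δ2 : ℕ}
    (G1 : SimpleGraph V1) (G2 : SimpleGraph V2) (ℓ : V1 → V2 → V1)
    (hℓ : IsRPLabelling G1 ℓ)
    (hc1 : G1.Connected) (hc2 : G2.Connected)
    (hr1 : ∀ x : V1, (G1.neighborSet x).ncard = δ1)
    (hr2 : ∀ i : V2, (G2.neighborSet i).ncard = δ2)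
    (hn : Fintype.card V1 = n) (hd : Fintype.card V2 = δ1) :
    restrictedEdgeConn (replacementProduct G1 G2 ℓ) ≤ min (edgeConn G1) (2 * δ2) :=
  restrictedEdgeConn_replacementProduct_upper_bound_general G1 G2 ℓ hℓ hc1 hc2 hr1 hr2 hd
end
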